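/- arXiv:1503.08368 — 5 statements merged into one kernel-verified Lean document; each statement's English description precedes it below -/
import Mathlib

section
/- For all integers n ≥ 1 and a ≥ 1, the sum over all permutations π in the symmetric group S_n of the binomial coefficient C(n + a − 1 − des(π), n) equals a^n, where des(π) = #{i ∈ {1,…,n−1} : π(i) > π(i+1)} is the number of descents of π. (Equivalently: each row of the Bayer–Diaconis a-shuffle transition matrix sums to 1, so it is a stochastic matrix.) -/
/-!
A word `w : Fin n → Fin a` is sorted by a unique permutation `π = Tuple.sort w`, and the words
sorted by `π` are exactly those for which `w ∘ π` is weakly increasing and strictly increasing at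
every descent of `π`. Adding to `w (π i)` the number of non-descents before `i` turns these
into strictly increasing maps `Fin n → Fin (n + a - 1 - des π)`, of which there are
`C(n + a - 1 - des π, n)`. Summing over `π` counts all `a ^ n` words.
-/

open Finset

/-- 0-indexed descent set of a deck arrangement: `i ∈ desSet n σ` iff the card at
position `i` is greater than the card at position `i+1` (positions `0, …, n-2`). -/
def desSet (n : ℕ) (σ : Equiv.Perm (Fin n)) : Finset ℕ :=
  (Finset.range (n - 1)).filter
    (fun i => ∃ h : i + 1 < n, σ ⟨i + 1, h⟩ < σ ⟨i, Nat.lt_of_succ_lt h⟩)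

/-- `des σ` is the number of descents of `σ`. -/
def des (n : ℕ) (σ : Equiv.Perm (Fin n)) : ℕ := (desSet n σ).card

lemma mem_desSet_iff {m : ℕ} (σ : Equiv.Perm (Fin (m + 1))) (k : Fin m) :
    (k : ℕ) ∈ desSet (m + 1) σ ↔ σ k.succ < σ k.castSucc := by
  simp [desSet]
  rfl

lemma sort_eq_iff_desSet {m : ℕ} {α : Type*} [LinearOrder α] (w : Fin (m + 1) → α)
    (σ : Equiv.Perm (Fin (m + 1))) :
    Tuple.sort w = σ ↔ Monotone (w ∘ σ) ∧
      ∀ k : Fin m, (k : ℕ) ∈ desSet (m + 1) σ → w (σ k.castSucc) < w (σ k.succ) := by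
  rw [eq_comm, Tuple.eq_sort_iff', Fin.strictMono_iff_lt_succ, Fin.monotone_iff_le_succ,
    ← forall_and]
  refine forall_congr' fun k => Prod.Lex.toLex_lt_toLex.trans ?_
  have hne : σ k.castSucc ≠ σ k.succ := σ.injective.ne Fin.castSucc_lt_succ.ne
  rw [mem_desSet_iff, Function.comp_apply, Function.comp_apply]
  generalize σ k.castSucc = p, σ k.succ = q at hne ⊢
  grind

lemma card_filter_sort_eq {m : ℕ} {α : Type*} [LinearOrder α] [Fintype α]
    (σ : Equiv.Perm (Fin (m + 1))) :
    #{w : Fin (m + 1) → α | Tuple.sort w = σ} =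
      #{y : Fin (m + 1) → α | Monotone y ∧
        ∀ k : Fin m, (k : ℕ) ∈ desSet (m + 1) σ → y k.castSucc < y k.succ} :=
  card_equiv (Equiv.arrowCongr σ.symm (Equiv.refl α)) fun w => by
    simp only [mem_filter, mem_univ, true_and, sort_eq_iff_desSet]
    rfl

theorem card_filter_strictMono (n N : ℕ) : #{g : Fin n → Fin N | StrictMono g} = N.choose n := by
  let e : {g : Fin n → Fin N // StrictMono g} ≃ (Fin n ↪o Fin N) :=
    { toFun g := .ofStrictMono g.1 g.2
      invFun f := ⟨f, f.strictMono⟩ }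
  rw [← Fintype.card_subtype, ← Nat.card_eq_fintype_card,
    Nat.card_congr (e.trans Set.powersetCard.ofFinEmbEquiv), Set.powersetCard.card, Nat.card_fin]

lemma Fin.val_le_of_strictMono {m N : ℕ} {g : Fin (m + 1) → Fin N} (hg : StrictMono g)
    (i : Fin (m + 1)) : (i : ℕ) ≤ g i := by
  induction i using Fin.induction with
  | zero => simp
  | succ i ih => exact ih.trans_lt (hg Fin.castSucc_lt_succ)

lemma card_range_add_one_sdiff (S : Finset ℕ) (k : ℕ) :
    #(range (k + 1) \ S) = #(range k \ S) + if k ∈ S then 0 else 1 := by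
  rw [range_add_one]
  split_ifs with hk
  · rw [insert_sdiff_of_mem _ hk, add_zero]
  · rw [insert_sdiff_of_notMem _ hk, card_insert_of_notMem (by simp)]

lemma add_card_range_sdiff_lt_iff (S : Finset ℕ) (k u v : ℕ) :
    u + #(range k \ S) < v + #(range (k + 1) \ S) ↔ u ≤ v ∧ (k ∈ S → u < v) := by
  rw [card_range_add_one_sdiff]
  grind

lemma card_range_sdiff_le {m : ℕ} {S : Finset ℕ} (hS : S ⊆ range m) {k : ℕ} (hk : k ≤ m) :
    #(range k \ S) ≤ m - #S := by
  rw [← card_range m, ← card_sdiff_of_subset hS]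
  exact card_le_card (sdiff_subset_sdiff (range_subset_range.2 hk) le_rfl)

namespace StrictMono

variable {m N : ℕ} {g : Fin (m + 1) → Fin N}

lemma card_range_sdiff_le (hg : StrictMono g) (S : Finset ℕ) (i : Fin (m + 1)) :
    #(range i \ S) ≤ g i :=
  (card_le_card sdiff_subset).trans ((card_range _).trans_le (Fin.val_le_of_strictMono hg i))

lemma sub_card_range_sdiff_le_and_lt (hg : StrictMono g) (S : Finset ℕ) (k : Fin m) :
    (g k.castSucc : ℕ) - #(range k \ S) ≤ g k.succ - #(range (k + 1) \ S) ∧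
      ((k : ℕ) ∈ S → (g k.castSucc : ℕ) - #(range k \ S) < g k.succ - #(range (k + 1) \ S)) := by
  rw [← add_card_range_sdiff_lt_iff]
  have h₁ := hg.card_range_sdiff_le S k.castSucc
  have h₂ := hg.card_range_sdiff_le S k.succ
  have h₃ : (g k.castSucc : ℕ) < g k.succ := hg Fin.castSucc_lt_succ
  simp only [Fin.val_castSucc, Fin.val_succ] at h₁ h₂
  omega

lemma monotone_sub_card_range_sdiff (hg : StrictMono g) (S : Finset ℕ) :
    Monotone fun i : Fin (m + 1) => (g i : ℕ) - #(range i \ S) :=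
  Fin.monotone_iff_le_succ.2 fun k => (hg.sub_card_range_sdiff_le_and_lt S k).1

end StrictMono

theorem card_filter_monotone_and_lt {m a : ℕ} {S : Finset ℕ} (hS : S ⊆ range m) :
    #{y : Fin (m + 1) → Fin a | Monotone y ∧ ∀ k : Fin m, (k : ℕ) ∈ S → y k.castSucc < y k.succ}
      = (m + a - #S).choose (m + 1) := by
  rw [← card_filter_strictMono]
  have hSm : #S ≤ m := by simpa using card_le_card hS
  refine card_bij' (fun y _ i => ⟨y i + #(range i \ S), ?_⟩)
    (fun g hg i => ⟨g i - #(range i \ S), ?_⟩) ?_ ?_ ?_ ?_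
  · have := card_range_sdiff_le hS i.is_le
    omega
  · have hg := (mem_filter.1 hg).2
    calc (g i : ℕ) - #(range i \ S) ≤ g (Fin.last m) - #(range m \ S) :=
          hg.monotone_sub_card_range_sdiff S (Fin.le_last i)
      _ < a := by
          have hlast_lt : (g (Fin.last m) : ℕ) < m + a - #S := (g _).isLt
          have hlast_ge : m ≤ g (Fin.last m) := Fin.val_le_of_strictMono hg (Fin.last m)
          rw [card_sdiff_of_subset hS, card_range]
          omega
  · intro y hy
    obtain ⟨hmono, hlt⟩ := (mem_filter.1 hy).2
    refine mem_filter.2 ⟨mem_univ _, Fin.strictMono_iff_lt_succ.2 fun k => ?_⟩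
    exact (add_card_range_sdiff_lt_iff S k _ _).2 ⟨hmono (Fin.castSucc_le_succ k), hlt k⟩
  · intro g hg
    have hg := (mem_filter.1 hg).2
    refine mem_filter.2 ⟨mem_univ _, Fin.monotone_iff_le_succ.2 fun k => ?_, fun k hk => ?_⟩
    · exact (hg.sub_card_range_sdiff_le_and_lt S k).1
    · exact (hg.sub_card_range_sdiff_le_and_lt S k).2 hk
  · intro y _
    ext i
    simp
  · intro g hg
    ext i
    have := (mem_filter.1 hg).2.card_range_sdiff_le S i
    simp only
    omega

theorem stmt0_general (n a : ℕ) (hn : 1 ≤ n) :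
    ∑ π : Equiv.Perm (Fin n), (n + a - 1 - des n π).choose n = a ^ n := by
  obtain ⟨m, rfl⟩ := Nat.exists_eq_add_of_le' hn
  calc ∑ π : Equiv.Perm (Fin (m + 1)), (m + 1 + a - 1 - des (m + 1) π).choose (m + 1)
      = ∑ π, #{w : Fin (m + 1) → Fin a | Tuple.sort w = π} := by
        refine sum_congr rfl fun π _ => ?_
        rw [card_filter_sort_eq,
          card_filter_monotone_and_lt (m := m) (S := desSet (m + 1) π) (filter_subset _ _), des]
        congr 1
        omega
    _ = Fintype.card (Fin (m + 1) → Fin a) :=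
        (card_eq_sum_card_fiberwise fun w _ => mem_univ (Tuple.sort w)).symm
    _ = a ^ (m + 1) := by simp

/-- Each row of the Bayer–Diaconis `a`-shuffle transition matrix sums to `1`:
`Σ_{π ∈ S_n} C(n + a - 1 - des(π), n) = a^n`. -/
theorem stmt0 (n a : ℕ) (hn : 1 ≤ n) (ha : 1 ≤ a) :
    ∑ π : Equiv.Perm (Fin n), (n + a - 1 - des n π).choose n = a ^ n :=
  stmt0_general n a hn
end

section
/- For all integers n ≥ 1 and a, b ≥ 1, the matrix product of the a-handed and b-handed riffle shuffle transition matrices on S_n equals the (ab)-handed riffle shuffle transition matrix: P_a · P_b = P_{ab}. In particular, performing the 2-handed GSR riffle shuffle t times in succession has the same transition matrix as a single 2^t-handed shuffle. -/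
open Finset

/-- Bayer–Diaconis `a`-handed riffle shuffle transition matrix on `S_n`:
`Pa n a σ τ = C(n + a - 1 - des(τ⁻¹∘σ), n) / a^n`. -/
def Pa (n a : ℕ) : Matrix (Equiv.Perm (Fin n)) (Equiv.Perm (Fin n)) ℚ :=
  fun σ τ => ((n + a - 1 - des n (τ⁻¹ * σ)).choose n : ℚ) / (a : ℚ) ^ n

/-!
Following Bayer and Diaconis, `C_a(π) = C(n + a - 1 - des π, n)` counts the words `v` of length
`n` over `a` letters that are compatible with `π`, i.e. for which `i ↦ (v i, π i)` increases
lexicographically: adding to `v i` the number of ascents of `π` before `i` turns them into the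
strictly increasing maps `Fin n → Fin (a + n - 1 - des π)`.

Words `t`, `s` compatible with `u⁻¹ * π` and `u` combine into the word `i ↦ (t i, s (u⁻¹ (π i)))`
over `Fin a ×ₗ Fin b ≃o Fin (a * b)`, which is compatible with `π`; conversely every such word
arises from exactly one triple `(u, t, s)`, because `u` is recovered by sorting the second letters.
Hence `∑ u, C_a(u⁻¹ * π) * C_b(u) = C_{ab}(π)`, which after the substitution `ρ = τ * u` is the
entry `(σ, τ)` of `P_a * P_b = P_{ab}`.
-/

namespace Fin

theorem val_le_of_strictMono_s2 {m N : ℕ} {w : Fin (m + 1) → Fin N} (hw : StrictMono w)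
    (j : Fin (m + 1)) : (j : ℕ) ≤ w j := by
  induction j using Fin.induction with
  | zero => exact Nat.zero_le _
  | succ i ih =>
    have := hw (castSucc_lt_succ (i := i))
    rw [lt_def] at this
    rw [val_castSucc] at ih
    rw [val_succ]
    omega

theorem natCard_strictMono (m N : ℕ) :
    Nat.card {w : Fin m → Fin N // StrictMono w} = N.choose m := by
  let e : {w : Fin m → Fin N // StrictMono w} ≃ (Fin m ↪o Fin N) :=
    { toFun := fun w => OrderEmbedding.ofStrictMono w.1 w.2
      invFun := fun f => ⟨f, f.strictMono⟩
      left_inv := fun _ => rfl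
      right_inv := fun _ => rfl }
  rw [Nat.card_congr (e.trans Set.powersetCard.ofFinEmbEquiv), Set.powersetCard.card,
    Nat.card_fin]

theorem monotone_val_sub_of_strictMono {m N : ℕ} {c : Fin (m + 1) → ℕ} (hc : ∀ j, c j ≤ j)
    (hstep : ∀ i : Fin m, c i.succ ≤ c i.castSucc + 1) {w : Fin (m + 1) → Fin N}
    (hw : StrictMono w) : Monotone fun j => (w j : ℕ) - c j := by
  refine monotone_iff_le_succ.2 fun i => ?_
  have := hw (castSucc_lt_succ (i := i))
  have := hc i.castSucc
  have := val_le_of_strictMono_s2 hw i.castSucc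
  have := hstep i
  rw [lt_def] at *
  omega

def strictMonoAddEquiv {m k : ℕ} (c : Fin (m + 1) → ℕ) (hc : ∀ j, c j ≤ j)
    (hstep : ∀ i : Fin m, c i.succ ≤ c i.castSucc + 1) :
    {v : Fin (m + 1) → Fin k // StrictMono fun j => (v j : ℕ) + c j} ≃
      {w : Fin (m + 1) → Fin (k + c (last m)) // StrictMono w} where
  toFun v := ⟨fun j => ⟨v.1 j + c j, (v.2.monotone (le_last j)).trans_lt (by omega)⟩,
    fun _ _ h => v.2 h⟩
  invFun w := ⟨fun j => ⟨w.1 j - c j,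
      (monotone_val_sub_of_strictMono hc hstep w.2 (le_last j)).trans_lt (by
        have := (w.1 (last m)).isLt
        have := hc (last m)
        have := val_le_of_strictMono_s2 w.2 (last m)
        dsimp only
        omega)⟩,
    fun i j h => by
      have := hc i; have := hc j
      have := val_le_of_strictMono_s2 w.2 i; have := val_le_of_strictMono_s2 w.2 j
      have := w.2 h
      rw [lt_def] at this
      dsimp only
      omega⟩
  left_inv v := by ext; simp
  right_inv w := by
    ext j
    have := hc j
    have := val_le_of_strictMono_s2 w.2 j
    dsimp only
    omega

end Fin

theorem des_le {n : ℕ} (π : Equiv.Perm (Fin n)) : des n π ≤ n - 1 :=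
  (card_filter_le _ _).trans (card_range _).le

theorem mem_desSet_succ_iff {m : ℕ} (π : Equiv.Perm (Fin (m + 1))) (i : Fin m) :
    (i : ℕ) ∈ desSet (m + 1) π ↔ π i.succ < π i.castSucc := by
  simp only [desSet, mem_filter, mem_range, Nat.add_sub_cancel]
  exact ⟨fun h => h.2.2, fun h => ⟨i.isLt, Nat.succ_lt_succ i.isLt, h⟩⟩

namespace RiffleShuffle

open Equiv

variable {n : ℕ} {α β : Type*} [LinearOrder α] [LinearOrder β]

/-- `v` weakly increases and strictly increases at each descent of `π`. The words over an
`a`-letter alphabet with this property encode the `a`-shuffles that produce `π`. -/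
def Compatible (π : Perm (Fin n)) (v : Fin n → α) : Prop :=
  StrictMono fun i => toLex (v i, π i)

theorem compatible_orderIso_comp_iff (e : α ≃o β) {π : Perm (Fin n)} {v : Fin n → α} :
    Compatible π (e ∘ v) ↔ Compatible π v := by
  simp [Compatible, StrictMono, Prod.Lex.toLex_lt_toLex]

theorem compatible_iff_eq_sort {u : Perm (Fin n)} {s : Fin n → α} :
    Compatible u s ↔ u = Tuple.sort (s ∘ ⇑u⁻¹) := by
  rw [Tuple.eq_sort_iff']
  simp only [Compatible, StrictMono, Perm.coe_inv, Tuple.graphEquiv₁, Function.comp_apply,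
    trans_apply, coe_fn_mk, symm_apply_apply, ← Subtype.coe_lt_coe]
  rfl

theorem Compatible.inv_lt_inv_iff {u : Perm (Fin n)} {s : Fin n → α} (hs : Compatible u s)
    (c c' : Fin n) : u⁻¹ c < u⁻¹ c' ↔ toLex (s (u⁻¹ c), c) < toLex (s (u⁻¹ c'), c') := by
  simpa using (hs.lt_iff_lt (a := u⁻¹ c) (b := u⁻¹ c')).symm

theorem Compatible.compatible_toLex_iff {π u : Perm (Fin n)} {s : Fin n → β}
    (hs : Compatible u s) (t : Fin n → α) :
    Compatible π (fun i => toLex (t i, s (u⁻¹ (π i)))) ↔ Compatible (u⁻¹ * π) t := by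
  suffices h : ∀ i j, toLex (toLex (t i, s (u⁻¹ (π i))), π i) <
      toLex (toLex (t j, s (u⁻¹ (π j))), π j) ↔
      toLex (t i, (u⁻¹ * π) i) < toLex (t j, (u⁻¹ * π) j) from
    forall₂_congr fun i j => imp_congr_right fun _ => h i j
  intro i j
  simp only [Perm.mul_apply, hs.inv_lt_inv_iff, Prod.Lex.toLex_lt_toLex, toLex_inj,
    Prod.mk.injEq]
  tauto

def combineWords (π : Perm (Fin n)) :
    (Σ u : Perm (Fin n), {t : Fin n → α // Compatible (u⁻¹ * π) t} ×
      {s : Fin n → β // Compatible u s}) → {V : Fin n → α ×ₗ β // Compatible π V} :=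
  fun x => ⟨fun i => toLex (x.2.1.1 i, x.2.2.1 (x.1⁻¹ (π i))),
    (x.2.2.2.compatible_toLex_iff _).2 x.2.1.2⟩

theorem combineWords_bijective (π : Perm (Fin n)) :
    Function.Bijective (combineWords (α := α) (β := β) π) := by
  constructor
  · rintro ⟨u, ⟨t, ht⟩, ⟨s, hs⟩⟩ ⟨u', ⟨t', ht'⟩, ⟨s', hs'⟩⟩ h
    have hV (i : Fin n) := congrFun (congrArg Subtype.val h) i
    simp only [combineWords, toLex_inj, Prod.mk.injEq] at hV
    have hy : s ∘ ⇑u⁻¹ = s' ∘ ⇑u'⁻¹ := funext fun c => by simpa using (hV (π⁻¹ c)).2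
    obtain rfl : u = u' :=
      (compatible_iff_eq_sort.1 hs).trans (hy ▸ compatible_iff_eq_sort.1 hs').symm
    obtain rfl : t = t' := funext fun i => (hV i).1
    obtain rfl : s = s' := funext fun j => by simpa using congrFun hy (u j)
    rfl
  · rintro ⟨V, hV⟩
    set y : Fin n → β := fun c => (ofLex (V (π⁻¹ c))).2
    have hs : Compatible (Tuple.sort y) (y ∘ Tuple.sort y) :=
      compatible_iff_eq_sort.2 (by simp [Function.comp_assoc])
    have hV' : (fun i => toLex ((ofLex (V i)).1,
        (y ∘ Tuple.sort y) ((Tuple.sort y)⁻¹ (π i)))) = V :=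
      funext fun i => by simp [y]
    exact ⟨⟨_, ⟨_, (hs.compatible_toLex_iff _).1 (hV' ▸ hV)⟩, ⟨_, hs⟩⟩, Subtype.ext hV'⟩

theorem sum_card_compatible_mul [Finite α] [Finite β] (π : Perm (Fin n)) :
    ∑ u : Perm (Fin n), Nat.card {t : Fin n → α // Compatible (u⁻¹ * π) t} *
      Nat.card {s : Fin n → β // Compatible u s} =
      Nat.card {V : Fin n → α ×ₗ β // Compatible π V} := by
  simp_rw [← Nat.card_prod]
  rw [← Nat.card_sigma]
  exact Nat.card_eq_of_bijective _ (combineWords_bijective π)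

def ascBelow (π : Perm (Fin n)) (j : ℕ) : ℕ := #{i ∈ range j | i ∉ desSet n π}

theorem ascBelow_le (π : Perm (Fin n)) (j : ℕ) : ascBelow π j ≤ j :=
  (card_filter_le _ _).trans (card_range j).le

theorem ascBelow_succ (π : Perm (Fin n)) (j : ℕ) :
    ascBelow π (j + 1) = ascBelow π j + if j ∈ desSet n π then 0 else 1 := by
  unfold ascBelow
  rw [range_add_one, filter_insert]
  split_ifs with h
  · rfl
  · exact card_insert_of_notMem (by simp)

theorem ascBelow_pred (π : Perm (Fin n)) : ascBelow π (n - 1) = n - 1 - des n π := by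
  have h : {i ∈ range (n - 1) | i ∈ desSet n π} = desSet n π :=
    filter_mem_eq_inter.trans (inter_eq_right.2 (filter_subset _ _))
  rw [ascBelow, filter_not, h, card_sdiff_of_subset (s := desSet n π) (filter_subset _ _),
    card_range, des]

theorem compatible_iff_strictMono_add_ascBelow {m k : ℕ} {π : Perm (Fin (m + 1))}
    {v : Fin (m + 1) → Fin k} :
    Compatible π v ↔ StrictMono fun j : Fin (m + 1) => (v j : ℕ) + ascBelow π j := by
  simp only [Compatible, Fin.strictMono_iff_lt_succ]
  refine forall_congr' fun i => ?_
  have hne : (π i.castSucc : ℕ) ≠ π i.succ :=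
    Fin.val_injective.ne (π.injective.ne Fin.castSucc_lt_succ.ne)
  rw [Prod.Lex.toLex_lt_toLex, Fin.val_succ, ascBelow_succ, Fin.val_castSucc]
  simp only [mem_desSet_succ_iff, Fin.lt_def, Fin.ext_iff]
  split_ifs with h
  · simp [h.not_gt]
  · simp only [Fin.val_fin_lt, lt_of_le_of_ne (not_lt.1 h) hne, and_true]
    omega

theorem card_compatible_fin (π : Perm (Fin n)) (k : ℕ) :
    Nat.card {v : Fin n → Fin k // Compatible π v} = (n + k - 1 - des n π).choose n := by
  cases n with
  | zero =>
    rw [Nat.choose_zero_right, Nat.card_eq_one_iff_unique]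
    exact ⟨inferInstance, ⟨⟨finZeroElim, fun i => i.elim0⟩⟩⟩
  | succ m =>
    have hstep (i : Fin m) : ascBelow π i.succ ≤ ascBelow π i.castSucc + 1 := by
      rw [Fin.val_succ, ascBelow_succ]
      split_ifs <;> simp
    rw [Nat.card_congr ((subtypeEquivRight fun _ => compatible_iff_strictMono_add_ascBelow).trans
      (Fin.strictMonoAddEquiv _ (fun j => ascBelow_le π j) hstep)), Fin.natCard_strictMono,
      Fin.val_last]
    have hasc : ascBelow π m = m - des (m + 1) π := ascBelow_pred π
    have hdes : des (m + 1) π ≤ m := des_le π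
    congr 1
    omega

theorem card_compatible [Fintype α] (π : Perm (Fin n)) :
    Nat.card {v : Fin n → α // Compatible π v} =
      (n + Fintype.card α - 1 - des n π).choose n := by
  let e := (Fintype.orderIsoFinOfCardEq α rfl).symm
  rw [← card_compatible_fin]
  exact Nat.card_congr <| ((Equiv.refl _).arrowCongr e.toEquiv).subtypeEquiv fun _ =>
    (compatible_orderIso_comp_iff e).symm

theorem sum_choose_mul_choose (π : Perm (Fin n)) (a b : ℕ) :
    ∑ u : Perm (Fin n), (n + a - 1 - des n (u⁻¹ * π)).choose n * (n + b - 1 - des n u).choose n =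
      (n + a * b - 1 - des n π).choose n := by
  simpa only [card_compatible, Fintype.card_fin, Fintype.card_lex, Fintype.card_prod] using
    sum_card_compatible_mul (α := Fin a) (β := Fin b) π

end RiffleShuffle

theorem stmt2_general (n a b : ℕ) :
    Pa n a * Pa n b = Pa n (a * b) := by
  ext σ τ
  rw [Matrix.mul_apply, ← Equiv.sum_comp (Equiv.mulLeft τ)]
  simp only [Pa, Equiv.coe_mulLeft, mul_inv_rev, mul_assoc, inv_mul_cancel_left,
    div_mul_div_comm, ← Finset.sum_div]
  rw [← RiffleShuffle.sum_choose_mul_choose (τ⁻¹ * σ) a b]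
  push_cast
  ring

/-- Composition: an `a`-shuffle followed by a `b`-shuffle is an `ab`-shuffle. -/
theorem stmt2 (n a b : ℕ) (hn : 1 ≤ n) (ha : 1 ≤ a) (hb : 1 ≤ b) :
    Pa n a * Pa n b = Pa n (a * b) :=
  stmt2_general n a b
end

section
/- The descent set is a Markov statistic for the a-handed riffle shuffle: for all integers n ≥ 1 and a ≥ 1, for all σ, σ' ∈ S_n with Des(σ) = Des(σ'), and for every subset S ⊆ {1,…,n−1}, one has Σ_{τ ∈ S_n : Des(τ) = S} P_a(σ,τ) = Σ_{τ ∈ S_n : Des(τ) = S} P_a(σ',τ). That is, the probability that an a-shuffle produces descents at a prescribed set of positions depends only on the descent set of the starting deck, not on the exact deck order. -/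
open Finset

/-!
Write `blockIndex T p` for the number of elements of `T` below `p`: the index of the block
containing position `p` when the positions are cut after each element of `T`. A permutation `τ`
has `Des τ ⊆ T` exactly when it increases on every block, i.e. when it is the stable sort of the
word `blockIndex T ∘ τ⁻¹`. So these `τ` correspond to the rearrangements `w` of `blockIndex T`,
via `w = blockIndex T ∘ τ⁻¹ ∘ σ`, and then `τ⁻¹ * σ` orders the positions lexicographically by
`(w i, σ i)`: its descent at `i` is decided by `w i` and `w (i + 1)` and, on a tie, by whether
`i ∈ Des σ`. Hence `∑_{Des τ ⊆ T} φ (Des (τ⁻¹ * σ))` depends only on `Des σ`, and Möbius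
inversion over `T` gives the same for `Des τ = S`. The shuffle probability `Pa n a σ τ` is such
a function of `Des (τ⁻¹ * σ)`.
-/

theorem Fin.strictMono_iff_lt_of_val_add_one_eq {n : ℕ} {α : Type*} [Preorder α]
    {f : Fin n → α} : StrictMono f ↔ ∀ i j : Fin n, (i : ℕ) + 1 = j → f i < f j := by
  cases n with
  | zero => exact ⟨fun _ i => i.elim0, fun _ i => i.elim0⟩
  | succ n =>
    rw [Fin.strictMono_iff_lt_succ]
    refine ⟨fun h i j hij => ?_, fun h i => h _ _ (by simp)⟩
    obtain ⟨i, rfl⟩ : ∃ i' : Fin n, i'.castSucc = i := ⟨⟨i, by omega⟩, rfl⟩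
    obtain rfl : i.succ = j := Fin.ext (by simpa using hij)
    exact h i

namespace Tuple

variable {n : ℕ} {α : Type*} [LinearOrder α] {f : Fin n → α} {σ : Equiv.Perm (Fin n)}

theorem eq_sort_iff_lt_of_val_add_one_eq : σ = sort f ↔
    ∀ i j : Fin n, (i : ℕ) + 1 = j → toLex (f (σ i), σ i) < toLex (f (σ j), σ j) := by
  rw [eq_sort_iff']
  exact Fin.strictMono_iff_lt_of_val_add_one_eq

theorem sort_inv_lt_sort_inv_iff (f : Fin n → α) (u v : Fin n) :
    (sort f)⁻¹ u < (sort f)⁻¹ v ↔ toLex (f u, u) < toLex (f v, v) := by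
  have h := (eq_sort_iff' (f := f)).1 rfl
  rw [← h.lt_iff_lt]
  simp only [Equiv.Perm.coe_inv, Equiv.trans_apply, Equiv.apply_symm_apply]
  rfl

end Tuple

theorem sum_filter_subset_eq_sum_powerset {ι α M : Type*} [DecidableEq α] [AddCommMonoid M]
    (s : Finset ι) (D : ι → Finset α) (f : ι → M) (S : Finset α) :
    ∑ i ∈ s with D i ⊆ S, f i = ∑ U ∈ S.powerset, ∑ i ∈ s with D i = U, f i := by
  simp only [sum_filter]
  rw [sum_comm]
  simp [mem_powerset]

theorem sum_filter_eq_eq_of_forall_sum_filter_subset_eq {ι α M : Type*} [DecidableEq α]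
    [AddCancelCommMonoid M] (s : Finset ι) (D : ι → Finset α) {f g : ι → M}
    (h : ∀ T, ∑ i ∈ s with D i ⊆ T, f i = ∑ i ∈ s with D i ⊆ T, g i) (S : Finset α) :
    ∑ i ∈ s with D i = S, f i = ∑ i ∈ s with D i = S, g i := by
  induction S using Finset.strongInduction with
  | H S ih =>
    have hS := h S
    rw [sum_filter_subset_eq_sum_powerset, sum_filter_subset_eq_sum_powerset,
      ← sum_erase_add _ _ (mem_powerset_self S), ← sum_erase_add _ _ (mem_powerset_self S),
      sum_congr rfl fun U hU => ih U ?_] at hS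
    · exact add_left_cancel hS
    · obtain ⟨hne, hsub⟩ := mem_erase.1 hU
      exact ssubset_of_subset_of_ne (mem_powerset.1 hsub) hne

section Descents

variable {n : ℕ}

theorem mem_desSet_iff_s9 {σ : Equiv.Perm (Fin n)} {i j : Fin n} (hij : (i : ℕ) + 1 = j) :
    (i : ℕ) ∈ desSet n σ ↔ σ j < σ i := by
  obtain ⟨j, hj⟩ := j
  subst hij
  simp [desSet, hj, Nat.lt_sub_iff_add_lt]

theorem desSet_subset_iff {σ : Equiv.Perm (Fin n)} {T : Finset ℕ} :
    desSet n σ ⊆ T ↔ ∀ i j : Fin n, (i : ℕ) + 1 = j → σ j < σ i → (i : ℕ) ∈ T := by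
  refine ⟨fun h i j hij hlt => h ((mem_desSet_iff_s9 hij).2 hlt), fun h k hk => ?_⟩
  obtain ⟨-, hk, hlt⟩ := mem_filter.1 hk
  exact h _ _ rfl hlt

def blockIndex (T : Finset ℕ) (p : Fin n) : ℕ := Nat.count (· ∈ T) p

theorem monotone_blockIndex (T : Finset ℕ) : Monotone (blockIndex (n := n) T) :=
  fun _ _ h => Nat.count_monotone _ h

theorem blockIndex_eq_iff {T : Finset ℕ} {i j : Fin n} (hij : (i : ℕ) + 1 = j) :
    blockIndex T j = blockIndex T i ↔ (i : ℕ) ∉ T := by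
  rw [blockIndex, ← hij]
  exact Nat.count_succ_eq_count_iff

theorem desSet_subset_iff_eq_sort {σ : Equiv.Perm (Fin n)} {T : Finset ℕ} :
    desSet n σ ⊆ T ↔ σ = Tuple.sort (blockIndex T ∘ ⇑σ⁻¹) := by
  rw [desSet_subset_iff, Tuple.eq_sort_iff_lt_of_val_add_one_eq]
  refine forall_congr' fun i => forall_congr' fun j => forall_congr' fun hij => ?_
  simp only [Function.comp_apply, Equiv.Perm.coe_inv, Equiv.symm_apply_apply,
    Prod.Lex.toLex_lt_toLex]
  have hle : blockIndex T i ≤ blockIndex T j := monotone_blockIndex T (Fin.le_def.2 (by omega))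
  by_cases hiT : (i : ℕ) ∈ T
  · have hne := mt (blockIndex_eq_iff hij).1 (not_not.2 hiT)
    simp only [hiT, imp_true_iff, true_iff]
    exact Or.inl (lt_of_le_of_ne hle (Ne.symm hne))
  · have hσ : σ i ≠ σ j := σ.injective.ne (Fin.ne_of_val_ne (by omega))
    simp only [hiT, imp_false, not_lt, (blockIndex_eq_iff hij).2 hiT, lt_irrefl, false_or,
      true_and, hσ.le_iff_lt]

def rearrangements {α : Type*} [DecidableEq α] (f : Fin n → α) : Finset (Fin n → α) :=
  univ.image fun π : Equiv.Perm (Fin n) => f ∘ π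

theorem comp_mem_rearrangements {α : Type*} [DecidableEq α] {f w : Fin n → α}
    (hw : w ∈ rearrangements f) (π : Equiv.Perm (Fin n)) : w ∘ π ∈ rearrangements f := by
  obtain ⟨ρ, -, rfl⟩ := mem_image.1 hw
  exact mem_image.2 ⟨ρ * π, mem_univ _, rfl⟩

theorem blockIndex_comp_sort_inv {T : Finset ℕ} {m : Fin n → ℕ}
    (hm : m ∈ rearrangements (blockIndex T)) : blockIndex T ∘ ⇑(Tuple.sort m)⁻¹ = m := by
  obtain ⟨π, -, rfl⟩ := mem_image.1 hm
  have hsorted : blockIndex T ∘ ⇑(π * Tuple.sort (blockIndex T ∘ π)) = blockIndex T :=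
    Tuple.unique_monotone (τ := 1) (by
      simpa only [Equiv.Perm.coe_mul, ← Function.comp_assoc] using Tuple.monotone_sort _)
      (monotone_blockIndex T)
  funext u
  simpa using (congrFun hsorted ((Tuple.sort (blockIndex T ∘ π))⁻¹ u)).symm

theorem sum_desSet_subset_eq_sum_rearrangements {M : Type*} [AddCommMonoid M]
    (T : Finset ℕ) (σ : Equiv.Perm (Fin n)) (F : Equiv.Perm (Fin n) → M) :
    ∑ τ ∈ univ.filter (fun τ => desSet n τ ⊆ T), F τ =
      ∑ w ∈ rearrangements (blockIndex T), F (Tuple.sort (w ∘ ⇑σ⁻¹)) := by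
  have hsort : ∀ w ∈ rearrangements (blockIndex T),
      blockIndex T ∘ ⇑(Tuple.sort (w ∘ ⇑σ⁻¹))⁻¹ = w ∘ ⇑σ⁻¹ :=
    fun w hw => blockIndex_comp_sort_inv (comp_mem_rearrangements hw _)
  have hτ : ∀ τ ∈ univ.filter (fun τ => desSet n τ ⊆ T),
      Tuple.sort ((blockIndex T ∘ ⇑τ⁻¹ ∘ σ) ∘ ⇑σ⁻¹) = τ := by
    intro τ hτ
    have hcancel : (blockIndex T ∘ ⇑τ⁻¹ ∘ σ) ∘ ⇑σ⁻¹ = blockIndex T ∘ ⇑τ⁻¹ := by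
      funext u
      simp
    rw [hcancel]
    exact (desSet_subset_iff_eq_sort.1 (mem_filter.1 hτ).2).symm
  refine sum_nbij' (fun τ => blockIndex T ∘ ⇑τ⁻¹ ∘ σ) (fun w => Tuple.sort (w ∘ ⇑σ⁻¹))
    (fun τ _ => mem_image.2 ⟨τ⁻¹ * σ, mem_univ _, rfl⟩) (fun w hw => ?_) hτ
    (fun w hw => ?_) (fun τ hτ' => congrArg F (hτ τ hτ').symm)
  · exact mem_filter.2 ⟨mem_univ _, desSet_subset_iff_eq_sort.2 (by rw [hsort w hw])⟩
  · rw [← Function.comp_assoc, hsort w hw]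
    funext u
    simp

def lexDesSet (w : Fin n → ℕ) (D : Finset ℕ) : Finset ℕ :=
  (range (n - 1)).filter fun i => ∃ h : i + 1 < n,
    w ⟨i + 1, h⟩ < w ⟨i, by omega⟩ ∨ (w ⟨i + 1, h⟩ = w ⟨i, by omega⟩ ∧ i ∈ D)

theorem desSet_sort_inv_mul (w : Fin n → ℕ) (σ : Equiv.Perm (Fin n)) :
    desSet n ((Tuple.sort (w ∘ ⇑σ⁻¹))⁻¹ * σ) = lexDesSet w (desSet n σ) := by
  refine filter_congr fun i _ => exists_congr fun h => ?_
  rw [Equiv.Perm.mul_apply, Equiv.Perm.mul_apply, Tuple.sort_inv_lt_sort_inv_iff,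
    Prod.Lex.toLex_lt_toLex, mem_desSet_iff_s9 (i := ⟨i, by omega⟩) (j := ⟨i + 1, h⟩) rfl]
  simp

theorem sum_desSet_subset_eq_sum_lexDesSet {M : Type*} [AddCommMonoid M] (φ : Finset ℕ → M)
    (σ : Equiv.Perm (Fin n)) (T : Finset ℕ) :
    ∑ τ ∈ univ.filter (fun τ => desSet n τ ⊆ T), φ (desSet n (τ⁻¹ * σ)) =
      ∑ w ∈ rearrangements (blockIndex (n := n) T), φ (lexDesSet w (desSet n σ)) := by
  rw [sum_desSet_subset_eq_sum_rearrangements T σ]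
  simp only [desSet_sort_inv_mul]

theorem sum_desSet_eq_eq_of_desSet_eq {M : Type*} [AddCancelCommMonoid M] (φ : Finset ℕ → M)
    {σ σ' : Equiv.Perm (Fin n)} (h : desSet n σ = desSet n σ') (S : Finset ℕ) :
    ∑ τ ∈ univ.filter (fun τ => desSet n τ = S), φ (desSet n (τ⁻¹ * σ)) =
      ∑ τ ∈ univ.filter (fun τ => desSet n τ = S), φ (desSet n (τ⁻¹ * σ')) :=
  sum_filter_eq_eq_of_forall_sum_filter_subset_eq _ _ (fun T => by
    rw [sum_desSet_subset_eq_sum_lexDesSet, sum_desSet_subset_eq_sum_lexDesSet, h]) S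

end Descents

theorem stmt9_general (n a : ℕ) (σ σ' : Equiv.Perm (Fin n))
    (h : desSet n σ = desSet n σ') (S : Finset ℕ) :
    ∑ τ ∈ Finset.univ.filter (fun τ : Equiv.Perm (Fin n) => desSet n τ = S), Pa n a σ τ =
    ∑ τ ∈ Finset.univ.filter (fun τ : Equiv.Perm (Fin n) => desSet n τ = S), Pa n a σ' τ :=
  sum_desSet_eq_eq_of_desSet_eq (fun D => ((n + a - 1 - D.card).choose n : ℚ) / (a : ℚ) ^ n) h S

/-- The descent set is a Markov statistic for the `a`-handed riffle shuffle:
the probability of producing a prescribed descent set depends only on the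
descent set of the starting deck. -/
theorem stmt9 (n a : ℕ) (hn : 1 ≤ n) (ha : 1 ≤ a) (σ σ' : Equiv.Perm (Fin n))
    (h : desSet n σ = desSet n σ') (S : Finset ℕ) :
    ∑ τ ∈ Finset.univ.filter (fun τ : Equiv.Perm (Fin n) => desSet n τ = S), Pa n a σ τ =
    ∑ τ ∈ Finset.univ.filter (fun τ : Equiv.Perm (Fin n) => desSet n τ = S), Pa n a σ' τ :=
  stmt9_general n a σ σ' h S
end

section
/- The descent set is a Markov statistic for the top-or-bottom-to-random shuffle: for every integer n ≥ 1, every parameter q ∈ [0,1], all σ, σ' ∈ S_n with Des(σ) = Des(σ'), and every subset S ⊆ {1,…,n−1}, one has Σ_{τ ∈ S_n : Des(τ) = S} P_q(σ,τ) = Σ_{τ ∈ S_n : Des(τ) = S} P_q(σ',τ). -/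
open Finset

/-- the cycle `e_i` (0-indexed): sends `j ↦ j-1` for `j > i`, `i ↦ n-1`, fixes `j < i`.
(`Fin.cycleRange i` is the cycle `c_i` (0-indexed): sends `j ↦ j+1` for `j < i`,
`i ↦ 0`, fixes `j > i`.) -/
def botCycle (n : ℕ) (i : Fin n) : Equiv.Perm (Fin n) :=
  Fin.revPerm * Fin.cycleRange i.rev * Fin.revPerm

/-- top-or-bottom-to-random transition matrix with parameter `q`:
with probability `q` remove the top card and reinsert it at a uniform position,
otherwise do the same with the bottom card. -/
noncomputable def Pq (n : ℕ) (q : ℝ) : Matrix (Equiv.Perm (Fin n)) (Equiv.Perm (Fin n)) ℝ :=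
  fun σ τ =>
    q / n * ((Finset.univ.filter (fun i : Fin n => τ = σ * Fin.cycleRange i)).card : ℝ) +
    (1 - q) / n * ((Finset.univ.filter (fun i : Fin n => τ = σ * botCycle n i)).card : ℝ)

/-!
Write the deck as a word `w`. Moving the top card to position `i` gives a word with descent
set `S_i`. Below `i - 1` it is the descent set `D` of `w` shifted down by one, above `i` it
is `D` itself, and the moved card is compared with `w_i` and `w_{i+1}`, so that if `S_i`
disagrees with the shifted `D` at `i - 1`, it agrees with `D` at `i`. Consequently `S_i` is
determined by `D` and the first position `k` where it disagrees with the shifted `D`, so all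
`S_i` lie in a set of at most `n` candidates depending on `D` only. The `n` sets `S_i` are
pairwise distinct: if `S_i = S_k` with `i < k`, the top card and `w_{i+1}, …, w_k` would
compare the same way all around a cycle. Hence `{S_i}` is exactly the candidate set and
`#{i | S_i = S}` depends only on `D`. Bottom-to-random is top-to-random conjugated by
reversing the deck, which acts on descent sets by reversal and complementation.
-/

section Words

variable {α : Type*} [LinearOrder α]

theorem cyclic_descents_not_constant {c : ℕ → α} {m : ℕ} (hc : c m ≠ c 0)
    (hstep : ∀ t, t + 1 < m → (c (t + 1) < c t ↔ c (t + 2) < c (t + 1))) :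
    ¬ (c m < c (m - 1) ↔ c 0 < c m) := by
  intro hwrap
  obtain _ | m := m
  · exact hc rfl
  have hconst : ∀ t ≤ m, (c (t + 1) < c t ↔ c 1 < c 0) := by
    intro t ht
    induction t with
    | zero => rfl
    | succ t ih => exact (hstep t (by omega)).symm.trans (ih (by omega))
  rw [Nat.add_sub_cancel, hconst m le_rfl] at hwrap
  by_cases hdesc : c 1 < c 0
  · have hle : ∀ t ≤ m, c t ≤ c 0 := by
      intro t ht
      induction t with
      | zero => exact le_rfl
      | succ t ih => exact ((hconst t (by omega)).mpr hdesc).le.trans (ih (by omega))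
    exact (((hconst m le_rfl).mpr hdesc).trans_le (hle m le_rfl)).not_gt (hwrap.mp hdesc)
  · have hle : ∀ t ≤ m + 1, c 0 ≤ c t := by
      intro t ht
      induction t with
      | zero => exact le_rfl
      | succ t ih =>
        exact (ih (by omega)).trans (not_lt.mp fun h => hdesc ((hconst t (by omega)).mp h))
    exact hc ((hle (m + 1) le_rfl).antisymm' (not_lt.mp fun h => hdesc (hwrap.mpr h)))

def descents (n : ℕ) (w : ℕ → α) : Finset ℕ :=
  (range (n - 1)).filter fun j => w (j + 1) < w j

theorem mem_descents {n j : ℕ} {w : ℕ → α} :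
    j ∈ descents n w ↔ j + 1 < n ∧ w (j + 1) < w j := by
  simp only [descents, mem_filter, mem_range, Nat.lt_sub_iff_add_lt]

def moveTop (i j : ℕ) : ℕ := if j < i then j + 1 else if j = i then 0 else j

theorem moveTop_of_lt {i j : ℕ} (h : j < i) : moveTop i j = j + 1 := if_pos h

@[simp] theorem moveTop_self (i : ℕ) : moveTop i i = 0 := by simp [moveTop]

theorem moveTop_of_gt {i j : ℕ} (h : i < j) : moveTop i j = j := by
  simp [moveTop, h.not_gt, h.ne']

theorem moveTop_of_le_of_lt {i j k : ℕ} (hij : i ≤ j) (hjk : j < k) :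
    moveTop k j = moveTop i (j + 1) := by
  rw [moveTop_of_lt hjk, moveTop_of_gt (Nat.lt_succ_of_le hij)]

def topCandidate (n : ℕ) (D : Finset ℕ) (k : ℕ) : Finset ℕ :=
  (range (n - 1)).filter fun j =>
    if j < k then j + 1 ∈ D else if j = k then j + 1 ∉ D else j ∈ D

variable {n i k : ℕ} {w : ℕ → α}

theorem mem_descents_comp_moveTop_of_succ_lt {j : ℕ} (hi : i < n) (hj : j + 1 < i) :
    j ∈ descents n (w ∘ moveTop i) ↔ j + 1 ∈ descents n w := by
  simp only [mem_descents, Function.comp_apply, moveTop_of_lt hj,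
    moveTop_of_lt (j.lt_succ_self.trans hj)]
  constructor <;> rintro ⟨-, h⟩ <;> exact ⟨by omega, h⟩

theorem mem_descents_comp_moveTop_of_gt {j : ℕ} (hj : i < j) :
    j ∈ descents n (w ∘ moveTop i) ↔ j ∈ descents n w := by
  simp only [mem_descents, Function.comp_apply, moveTop_of_gt hj,
    moveTop_of_gt (hj.trans j.lt_succ_self)]

theorem mem_descents_comp_moveTop_self (hi : i < n) (h0 : 0 < i)
    (h : i - 1 ∈ descents n (w ∘ moveTop i) ↔ i ∉ descents n w) :
    i ∈ descents n (w ∘ moveTop i) ↔ i ∈ descents n w := by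
  simp only [mem_descents, Function.comp_apply, moveTop_of_lt (Nat.sub_lt h0 one_pos),
    Nat.sub_add_cancel (show 1 ≤ i from h0), moveTop_self, moveTop_of_gt i.lt_succ_self, hi,
    true_and] at h ⊢
  by_cases hn : i + 1 < n
  · simp only [hn, true_and] at h ⊢
    by_cases hd : w (i + 1) < w i
    · exact iff_of_true (hd.trans_le (not_lt.mp fun h' => h.mp h' hd)) hd
    · exact iff_of_false (fun h' => hd (h'.trans (h.mpr hd))) hd
  · simp [hn]

theorem descents_comp_moveTop_ne (hk0 : w k ≠ w 0) (hik : i < k) (hk : k < n) :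
    descents n (w ∘ moveTop i) ≠ descents n (w ∘ moveTop k) := by
  intro h
  have hstep : ∀ j, i ≤ j → j + 1 < k → (w (moveTop i (j + 1)) < w (moveTop i j) ↔
      w (moveTop i (j + 2)) < w (moveTop i (j + 1))) := by
    intro j hij hjk
    have := Finset.ext_iff.mp h j
    simp only [mem_descents, Function.comp_apply,
      moveTop_of_le_of_lt hij (j.lt_succ_self.trans hjk),
      moveTop_of_le_of_lt (hij.trans j.le_succ) hjk] at this
    simpa [show j + 1 < n by omega] using this
  have hwrap := Finset.ext_iff.mp h (k - 1)
  simp only [mem_descents, Function.comp_apply, Nat.sub_add_cancel (show 1 ≤ k by omega),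
    moveTop_self, moveTop_of_lt (show k - 1 < k by omega), moveTop_of_gt hik, hk, true_and]
    at hwrap
  -- `c` is the top card followed by `w (i + 1), …, w k`; moving the top card to `k` instead of
  -- `i` reads this word rotated by one.
  apply cyclic_descents_not_constant (c := fun t => w (moveTop i (i + t))) (m := k - i)
  · simpa [Nat.add_sub_cancel' hik.le, moveTop_of_gt hik] using hk0
  · exact fun t ht => hstep (i + t) (Nat.le_add_right i t) (by omega)
  · simpa [Nat.add_sub_cancel' hik.le, moveTop_of_gt hik, show i + (k - i - 1) = k - 1 by omega]
      using hwrap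

theorem descents_comp_moveTop_mem_image (hi : i < n) :
    descents n (w ∘ moveTop i) ∈ (range n).image (topCandidate n (descents n w)) := by
  set S := descents n (w ∘ moveTop i)
  set D := descents n w
  have hP : ∃ k, n - 1 ≤ k ∨ (k ∈ S ↔ k + 1 ∉ D) := ⟨n - 1, Or.inl le_rfl⟩
  set k := Nat.find hP
  have hkn : k ≤ n - 1 := Nat.find_min' hP (Or.inl le_rfl)
  have hk : k < n - 1 → (k ∈ S ↔ k + 1 ∉ D) := fun h =>
    (Nat.find_spec hP).resolve_left (by omega)
  have hbelow : ∀ j < k, j ∈ S ↔ j + 1 ∈ D := fun j hj => by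
    have := Nat.find_min hP hj
    tauto
  have hik : i ≤ k + 1 := by
    by_contra! hki
    have := mem_descents_comp_moveTop_of_succ_lt (w := w) hi hki
    have := hk (by omega)
    tauto
  have hS : ∀ j ∈ S, j < n - 1 := fun j hj => by have := (mem_descents.mp hj).1; omega
  suffices h : ∀ j < n - 1,
      (j ∈ S ↔ if j < k then j + 1 ∈ D else if j = k then j + 1 ∉ D else j ∈ D) by
    refine mem_image.mpr ⟨k, mem_range.mpr (by omega), ?_⟩
    ext j
    simp only [topCandidate, mem_filter, mem_range]
    exact ⟨fun ⟨hj, hjk⟩ => (h j hj).mpr hjk,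
      fun hj => ⟨hS j hj, (h j (hS j hj)).mp hj⟩⟩
  intro j hj
  rcases lt_trichotomy j k with hjk | rfl | hjk
  · rw [if_pos hjk]
    exact hbelow j hjk
  · rw [if_neg (lt_irrefl _), if_pos rfl]
    exact hk hj
  · rw [if_neg (by omega), if_neg (by omega)]
    rcases (show i ≤ j by omega).lt_or_eq with hij | rfl
    · exact mem_descents_comp_moveTop_of_gt hij
    · refine mem_descents_comp_moveTop_self hi (by omega) ?_
      have hki := hk (by omega)
      rwa [show k + 1 = i by omega, show k = i - 1 by omega] at hki

end Words

def deckWord (n : ℕ) (σ : Equiv.Perm (Fin n)) (j : ℕ) : ℕ :=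
  if h : j < n then σ ⟨j, h⟩ else 0

def revCompl (n : ℕ) (T : Finset ℕ) : Finset ℕ :=
  (range (n - 1)).filter fun j => n - 2 - j ∉ T

section Deck

variable {n : ℕ} (σ : Equiv.Perm (Fin n))

theorem desSet_eq_descents : desSet n σ = descents n (deckWord n σ) := by
  ext j
  simp only [desSet, mem_filter, mem_range, mem_descents, deckWord]
  constructor
  · rintro ⟨-, h, hlt⟩
    exact ⟨h, by rwa [dif_pos h, dif_pos (by omega)]⟩
  · rintro ⟨h, hlt⟩
    rw [dif_pos h, dif_pos (by omega)] at hlt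
    exact ⟨by omega, h, hlt⟩

theorem deckWord_injOn : Set.InjOn (deckWord n σ) (Set.Iio n) := by
  intro a ha b hb h
  simp only [deckWord, dif_pos (Set.mem_Iio.mp ha), dif_pos (Set.mem_Iio.mp hb)] at h
  exact congrArg Fin.val (σ.injective (Fin.ext h))

theorem deckWord_mul_cycleRange (i : Fin n) :
    deckWord n (σ * Fin.cycleRange i) = deckWord n σ ∘ moveTop i := by
  funext j
  by_cases hj : j < n
  · have hc : moveTop i j < n := by unfold moveTop; split_ifs <;> omega
    have : Fin.cycleRange i ⟨j, hj⟩ = ⟨moveTop i j, hc⟩ := by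
      ext
      dsimp only
      rcases lt_trichotomy j i with h | rfl | h
      · rw [Fin.coe_cycleRange_of_lt (show (⟨j, hj⟩ : Fin n) < i from h), moveTop_of_lt h]
      · rw [Fin.eta, Fin.coe_cycleRange_of_le le_rfl, if_pos rfl, moveTop_self]
      · rw [Fin.cycleRange_of_gt (show i < (⟨j, hj⟩ : Fin n) from h), moveTop_of_gt h]
    simp [deckWord, hj, hc, this]
  · simp [deckWord, hj, moveTop_of_gt (show (i : ℕ) < j by omega)]

theorem desSet_mul_cycleRange (i : Fin n) :
    desSet n (σ * Fin.cycleRange i) = descents n (deckWord n σ ∘ moveTop i) := by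
  rw [desSet_eq_descents, deckWord_mul_cycleRange]

theorem desSet_mul_cycleRange_injective :
    Function.Injective fun i : Fin n => desSet n (σ * Fin.cycleRange i) := by
  have hne : ∀ k : Fin n, (k : ℕ) ≠ 0 → deckWord n σ k ≠ deckWord n σ 0 := fun k hk =>
    (deckWord_injOn σ).ne k.isLt (Set.mem_Iio.mpr k.pos) hk
  intro i k h
  simp only [desSet_mul_cycleRange] at h
  by_contra hik
  rcases Fin.lt_or_lt_of_ne hik with hlt | hlt
  · exact descents_comp_moveTop_ne (hne k (by omega)) hlt k.isLt h
  · exact descents_comp_moveTop_ne (hne i (by omega)) hlt i.isLt h.symm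

theorem map_desSet_mul_cycleRange :
    univ.val.map (fun i : Fin n => desSet n (σ * Fin.cycleRange i)) =
      ((range n).image (topCandidate n (desSet n σ))).val := by
  rw [← image_val_of_injOn (desSet_mul_cycleRange_injective σ).injOn]
  congr 1
  refine eq_of_subset_of_card_le ?_ ?_
  · intro T hT
    obtain ⟨i, -, rfl⟩ := mem_image.mp hT
    rw [desSet_mul_cycleRange, desSet_eq_descents]
    exact descents_comp_moveTop_mem_image i.isLt
  · rw [card_image_of_injective _ (desSet_mul_cycleRange_injective σ), card_univ,
      Fintype.card_fin]
    exact card_image_le.trans (card_range n).le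

theorem deckWord_mul_revPerm {j : ℕ} (hj : j < n) :
    deckWord n (σ * Fin.revPerm) j = deckWord n σ (n - 1 - j) := by
  simp only [deckWord, dif_pos hj, dif_pos (show n - 1 - j < n by omega), Equiv.Perm.mul_apply,
    Fin.revPerm_apply]
  congr 3
  ext
  simp only [Fin.val_rev]
  omega

theorem desSet_mul_revPerm : desSet n (σ * Fin.revPerm) = revCompl n (desSet n σ) := by
  ext j
  simp only [desSet_eq_descents, revCompl, mem_filter, mem_range, mem_descents]
  by_cases hj : j + 1 < n
  · have hab : deckWord n σ (n - 2 - j) ≠ deckWord n σ (n - 1 - j) :=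
      (deckWord_injOn σ).ne (Set.mem_Iio.mpr (by omega)) (Set.mem_Iio.mpr (by omega)) (by omega)
    rw [deckWord_mul_revPerm σ hj, deckWord_mul_revPerm σ (by omega),
      show n - 1 - (j + 1) = n - 2 - j by omega, show n - 2 - j + 1 = n - 1 - j by omega]
    simp only [hj, show j < n - 1 by omega, show n - 1 - j < n by omega, true_and, not_lt,
      hab.le_iff_lt]
  · simp [hj, show ¬ j < n - 1 by omega]

theorem map_desSet_mul_botCycle :
    univ.val.map (fun i : Fin n => desSet n (σ * botCycle n i)) =
      ((range n).image (topCandidate n (revCompl n (desSet n σ)))).val.map (revCompl n) := by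
  have hbot : ∀ i, desSet n (σ * botCycle n i) =
      revCompl n (desSet n (σ * Fin.revPerm * Fin.cycleRange i.rev)) := by
    intro i
    rw [← desSet_mul_revPerm, botCycle]
    simp only [mul_assoc]
  rw [← desSet_mul_revPerm, ← map_desSet_mul_cycleRange, Multiset.map_map]
  conv_lhs => rw [← Multiset.map_univ_val_equiv Fin.revPerm, Multiset.map_map]
  congr 1
  funext i
  simp [hbot]

end Deck

theorem sum_card_filter_eq_count {ι α β : Type*} [Fintype ι] [Fintype α] [DecidableEq α]
    [DecidableEq β] (f : ι → α) (g : α → β) (b : β) :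
    ∑ a ∈ univ.filter (fun a => g a = b), #(univ.filter fun i => a = f i) =
      Multiset.count b (univ.val.map (g ∘ f)) := by
  rw [Multiset.count_map]
  change _ = #(univ.filter fun i => b = g (f i))
  rw [card_eq_sum_card_fiberwise (f := f) (t := univ.filter (fun a => g a = b))]
  · refine sum_congr rfl fun a ha => ?_
    rw [filter_filter]
    congr 1
    ext i
    simp only [mem_filter, mem_univ, true_and] at ha ⊢
    constructor
    · rintro rfl
      exact ⟨ha.symm, rfl⟩
    · exact fun h => h.2.symm
  · intro i hi
    simp only [coe_filter, mem_univ, true_and] at hi ⊢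
    exact hi.symm

theorem sum_Pq_filter_desSet (n : ℕ) (q : ℝ) (σ : Equiv.Perm (Fin n)) (S : Finset ℕ) :
    ∑ τ ∈ univ.filter (fun τ : Equiv.Perm (Fin n) => desSet n τ = S), Pq n q σ τ =
      q / n * Multiset.count S (univ.val.map fun i : Fin n => desSet n (σ * Fin.cycleRange i)) +
      (1 - q) / n *
        Multiset.count S (univ.val.map fun i : Fin n => desSet n (σ * botCycle n i)) := by
  simp only [Pq, sum_add_distrib, ← mul_sum, ← Nat.cast_sum]
  rw [sum_card_filter_eq_count (fun i => σ * Fin.cycleRange i) (desSet n),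
    sum_card_filter_eq_count (fun i => σ * botCycle n i) (desSet n)]
  rfl

theorem stmt10_general (n : ℕ) (q : ℝ)
    (σ σ' : Equiv.Perm (Fin n)) (h : desSet n σ = desSet n σ') (S : Finset ℕ) :
    ∑ τ ∈ Finset.univ.filter (fun τ : Equiv.Perm (Fin n) => desSet n τ = S), Pq n q σ τ =
    ∑ τ ∈ Finset.univ.filter (fun τ : Equiv.Perm (Fin n) => desSet n τ = S), Pq n q σ' τ := by
  rw [sum_Pq_filter_desSet, sum_Pq_filter_desSet, map_desSet_mul_cycleRange,
    map_desSet_mul_cycleRange σ', map_desSet_mul_botCycle, map_desSet_mul_botCycle σ', h]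

/-- The descent set is a Markov statistic for the top-or-bottom-to-random shuffle. -/
theorem stmt10 (n : ℕ) (hn : 1 ≤ n) (q : ℝ) (hq : q ∈ Set.Icc (0 : ℝ) 1)
    (σ σ' : Equiv.Perm (Fin n)) (h : desSet n σ = desSet n σ') (S : Finset ℕ) :
    ∑ τ ∈ Finset.univ.filter (fun τ : Equiv.Perm (Fin n) => desSet n τ = S), Pq n q σ τ =
    ∑ τ ∈ Finset.univ.filter (fun τ : Equiv.Perm (Fin n) => desSet n τ = S), Pq n q σ' τ :=
  stmt10_general n q σ σ' h S
end

section
/- Let n ≥ 3, q ∈ [0,1], and let P_q be the top-or-bottom-to-random transition matrix on S_n. Define g : S_n → ℝ by g(σ) = Σ_{i ∈ Peak(σ)} C(n−3, i−1)·q^{i−1}·(1−q)^{n−2−i}. Then for every integer t ≥ 0, the entry of the vector P_q^t · g at the identity permutation equals (1 − ((n−3)/n)^t)·(1/3). (In words: starting from an ascendingly ordered deck, the expected value of the weighted peak statistic g after t top-or-bottom-to-random shuffles is (1 − ((n−3)/n)^t)/3.) -/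
open Finset

/-- 0-indexed peak set: positions `i` with `σ(i) < σ(i+1) > σ(i+2)`. -/
def peakSet (n : ℕ) (σ : Equiv.Perm (Fin n)) : Finset ℕ :=
  (Finset.range (n - 2)).filter
    (fun i => ∃ h : i + 2 < n,
      σ ⟨i, Nat.lt_of_succ_lt (Nat.lt_of_succ_lt h)⟩ < σ ⟨i + 1, Nat.lt_of_succ_lt h⟩ ∧
      σ ⟨i + 2, h⟩ < σ ⟨i + 1, Nat.lt_of_succ_lt h⟩)

/-- `pk σ` is the number of peaks of `σ`. -/
def pk (n : ℕ) (σ : Equiv.Perm (Fin n)) : ℕ := (peakSet n σ).card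

/-- weighted peak statistic `g(σ) = Σ_{j ∈ Peak(σ)} C(n-3,j) q^j (1-q)^{n-3-j}`
(0-indexed version of `Σ_{i ∈ Peak(σ)} C(n-3,i-1) q^{i-1} (1-q)^{n-2-i}`). -/
noncomputable def gpk (n : ℕ) (q : ℝ) (σ : Equiv.Perm (Fin n)) : ℝ :=
  ∑ j ∈ peakSet n σ, ((n - 3).choose j : ℝ) * q ^ j * (1 - q) ^ (n - 3 - j)

/-! Write `gpk = ∑ⱼ wⱼ Xⱼ`, with `Xⱼ` the indicator of a peak at position `j` and `wⱼ` the
binomial weights. Inserting the top card at position `i` leaves the window `j, j+1, j+2` in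
place for `i < j` and shifts it to `j+1, j+2, j+3` for `i > j+2`; for the three positions
inside the window it creates exactly one peak, since exactly one of three distinct cards is the
largest. As `(1-q)(j+1)wⱼ₊₁ = q(n-3-j)wⱼ`, the shifted terms telescope and
`q ∑ᵢ g(σ cᵢ) = M_q(σ) + q`, where `M_q = ∑ⱼ j wⱼ Xⱼ`. Bottom-to-random is top-to-random
conjugated by reversing the deck, which moves a peak from `j` to `n-3-j` and turns the weights
for `q` into those for `1-q`; the two first moments then add up to `(n-3) g`, so
`P_q g = ((n-3) g + 1)/n`. Since `P_q` is stochastic and the sorted deck has no peaks, iterating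
this affine relation gives the formula. -/

open Equiv Matrix

theorem Matrix.pow_mulVec_eq_of_mulVec_eq_affine {ι R : Type*} [Fintype ι] [DecidableEq ι]
    [CommRing R] {M : Matrix ι ι R} {g : ι → R} {a b : R} (hM : M *ᵥ 1 = 1)
    (hg : M *ᵥ g = a • g + ((1 - a) * b) • 1) (t : ℕ) :
    M ^ t *ᵥ g = a ^ t • g + ((1 - a ^ t) * b) • 1 := by
  induction t with
  | zero => simp
  | succ t ih =>
    rw [pow_succ', ← mulVec_mulVec, ih, mulVec_add, mulVec_smul, mulVec_smul, hg, hM]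
    ext i
    simp only [Pi.add_apply, Pi.smul_apply, smul_eq_mul, Pi.one_apply]
    ring

theorem sum_card_fiber_mul_eq_sum_comp {α β : Type*} [Fintype α] [Fintype β] [DecidableEq β]
    (g : α → β) (f : β → ℝ) :
    ∑ b, (#{a | b = g a} : ℝ) * f b = ∑ a, f (g a) := by
  simp_rw [card_filter, Nat.cast_sum, sum_mul]
  rw [sum_comm]
  simp

theorem Fin.val_cycleRange {n : ℕ} (i p : Fin n) :
    (Fin.cycleRange i p : ℕ) =
      if (p : ℕ) < i then (p : ℕ) + 1 else if (p : ℕ) = i then 0 else (p : ℕ) := by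
  rcases lt_trichotomy p i with h | rfl | h
  · simp [Fin.lt_def.mp h, Fin.coe_cycleRange_of_lt h]
  · simp [Fin.coe_cycleRange_of_le le_rfl]
  · simp [(Fin.lt_def.mp h).not_gt, Fin.val_ne_of_ne h.ne', Fin.cycleRange_of_gt h]

theorem ite_max_add_ite_max_add_ite_max_eq_one {α : Type*} [LinearOrder α] {x y z : α}
    (hxy : x ≠ y) (hxz : x ≠ z) (hyz : y ≠ z) :
    ((if x < y ∧ z < y then 1 else 0) + (if y < x ∧ z < x then 1 else 0) +
      (if y < z ∧ x < z then 1 else 0) : ℝ) = 1 := by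
  rcases hxy.lt_or_gt with h₁ | h₁ <;> rcases hxz.lt_or_gt with h₂ | h₂ <;>
    rcases hyz.lt_or_gt with h₃ | h₃ <;>
    simp [h₁, h₂, h₃, h₁.not_gt, h₂.not_gt, h₃.not_gt] <;> order

theorem Pq_mulVec_apply (n : ℕ) (q : ℝ) (f : Perm (Fin n) → ℝ) (σ : Perm (Fin n)) :
    (Pq n q *ᵥ f) σ =
      q / n * ∑ i, f (σ * Fin.cycleRange i) + (1 - q) / n * ∑ i, f (σ * botCycle n i) := by
  simp only [Matrix.mulVec, dotProduct, Pq, add_mul, mul_assoc, sum_add_distrib, ← mul_sum,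
    sum_card_fiber_mul_eq_sum_comp]

theorem Pq_mulVec_one {n : ℕ} (hn : n ≠ 0) (q : ℝ) : Pq n q *ᵥ 1 = 1 := by
  ext σ
  rw [Pq_mulVec_apply]
  simp only [Pi.one_apply, sum_const, card_univ, Fintype.card_fin, nsmul_eq_mul, mul_one]
  field_simp
  ring

noncomputable def peakIndicator (n : ℕ) (σ : Perm (Fin n)) (j : ℕ) : ℝ :=
  if j ∈ peakSet n σ then 1 else 0

noncomputable def peakWeight (n : ℕ) (q : ℝ) (j : ℕ) : ℝ :=
  (n - 3).choose j * q ^ j * (1 - q) ^ (n - 3 - j)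

noncomputable def peakMoment (n : ℕ) (q : ℝ) (σ : Perm (Fin n)) : ℝ :=
  ∑ j ∈ range (n - 2), j * peakWeight n q j * peakIndicator n σ j

section Peaks

variable {n : ℕ} {σ : Perm (Fin n)} {j : ℕ}

theorem peakSet_subset_range : peakSet n σ ⊆ range (n - 2) :=
  filter_subset _ _

theorem mem_peakSet_iff (hj : j + 2 < n) :
    j ∈ peakSet n σ ↔
      σ ⟨j, by omega⟩ < σ ⟨j + 1, by omega⟩ ∧ σ ⟨j + 2, hj⟩ < σ ⟨j + 1, by omega⟩ := by
  rw [peakSet, mem_filter, mem_range]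
  exact ⟨fun h => h.2.2, fun h => ⟨by omega, hj, h⟩⟩

theorem mem_peakSet_mul_iff {π : Perm (Fin n)} (hj : j + 2 < n) {a b c : Fin n}
    (ha : (π ⟨j, by omega⟩ : ℕ) = a) (hb : (π ⟨j + 1, by omega⟩ : ℕ) = b)
    (hc : (π ⟨j + 2, hj⟩ : ℕ) = c) :
    j ∈ peakSet n (σ * π) ↔ σ a < σ b ∧ σ c < σ b := by
  rw [mem_peakSet_iff hj, Perm.mul_apply, Perm.mul_apply, Perm.mul_apply, Fin.ext ha, Fin.ext hb,
    Fin.ext hc]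

theorem mem_peakSet_mul_iff_of_shift {π : Perm (Fin n)} {k : ℕ} (hj : j + 2 < n)
    (hk : k + 2 < n) (h₀ : (π ⟨j, by omega⟩ : ℕ) = k) (h₁ : (π ⟨j + 1, by omega⟩ : ℕ) = k + 1)
    (h₂ : (π ⟨j + 2, hj⟩ : ℕ) = k + 2) :
    j ∈ peakSet n (σ * π) ↔ k ∈ peakSet n σ := by
  rw [mem_peakSet_iff hk]
  exact mem_peakSet_mul_iff hj h₀ h₁ h₂

theorem mem_peakSet_mul_revPerm_iff (hj : j + 2 < n) :
    j ∈ peakSet n (σ * Fin.revPerm) ↔ n - 3 - j ∈ peakSet n σ := by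
  rw [mem_peakSet_iff (by omega : n - 3 - j + 2 < n), and_comm]
  refine mem_peakSet_mul_iff hj ?_ ?_ ?_ <;> simp only [Fin.revPerm_apply, Fin.val_rev] <;> omega

theorem peakIndicator_of_le (hj : n - 2 ≤ j) : peakIndicator n σ j = 0 :=
  if_neg fun h => by have := mem_range.mp (peakSet_subset_range h); omega

theorem peakIndicator_mul_eq_ite {π : Perm (Fin n)} (hj : j + 2 < n) {a b c : Fin n}
    (ha : (π ⟨j, by omega⟩ : ℕ) = a) (hb : (π ⟨j + 1, by omega⟩ : ℕ) = b)
    (hc : (π ⟨j + 2, hj⟩ : ℕ) = c) :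
    peakIndicator n (σ * π) j = if σ a < σ b ∧ σ c < σ b then 1 else 0 := by
  simp only [peakIndicator, mem_peakSet_mul_iff hj ha hb hc]

theorem peakIndicator_mul_cycleRange_of_lt {i : Fin n} (hj : j + 2 < n) (hi : (i : ℕ) < j) :
    peakIndicator n (σ * Fin.cycleRange i) j = peakIndicator n σ j := by
  have : j ∈ peakSet n (σ * Fin.cycleRange i) ↔ j ∈ peakSet n σ := by
    refine mem_peakSet_mul_iff_of_shift hj hj ?_ ?_ ?_ <;>
      simp only [Fin.val_cycleRange] <;> split_ifs <;> omega
  simp only [peakIndicator, this]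

theorem peakIndicator_mul_cycleRange_of_gt {i : Fin n} (hj : j + 2 < n) (hi : j + 2 < i) :
    peakIndicator n (σ * Fin.cycleRange i) j = peakIndicator n σ (j + 1) := by
  have : j ∈ peakSet n (σ * Fin.cycleRange i) ↔ j + 1 ∈ peakSet n σ := by
    refine mem_peakSet_mul_iff_of_shift hj (by omega) ?_ ?_ ?_ <;>
      simp only [Fin.val_cycleRange] <;> split_ifs <;> omega
  simp only [peakIndicator, this]

theorem sum_peakIndicator_mul_cycleRange (σ : Perm (Fin n)) (hj : j + 2 < n) :
    ∑ i, peakIndicator n (σ * Fin.cycleRange i) j =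
      j * peakIndicator n σ j + (n - 3 - j : ℕ) * peakIndicator n σ (j + 1) + 1 := by
  rw [sum_fin_eq_sum_range, range_eq_Ico, ← sum_Ico_consecutive _ (Nat.zero_le (j + 3)) hj,
    ← range_eq_Ico, sum_range_succ, sum_range_succ, sum_range_succ]
  have below : ∀ k ∈ range j, (if h : k < n then
      peakIndicator n (σ * Fin.cycleRange ⟨k, h⟩) j else 0) = peakIndicator n σ j := by
    intro k hk
    rw [mem_range] at hk
    rw [dif_pos (by omega), peakIndicator_mul_cycleRange_of_lt hj hk]
  have above : ∀ k ∈ Ico (j + 3) n, (if h : k < n then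
      peakIndicator n (σ * Fin.cycleRange ⟨k, h⟩) j else 0) = peakIndicator n σ (j + 1) := by
    intro k hk
    rw [mem_Ico] at hk
    rw [dif_pos hk.2, peakIndicator_mul_cycleRange_of_gt hj (show j + 2 < k by omega)]
  obtain ⟨p₀, hp₀⟩ : ∃ p : Fin n, (p : ℕ) = 0 := ⟨⟨0, by omega⟩, rfl⟩
  obtain ⟨p₁, hp₁⟩ : ∃ p : Fin n, (p : ℕ) = j + 1 := ⟨⟨j + 1, by omega⟩, rfl⟩
  obtain ⟨p₂, hp₂⟩ : ∃ p : Fin n, (p : ℕ) = j + 2 := ⟨⟨j + 2, hj⟩, rfl⟩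
  have one_max := ite_max_add_ite_max_add_ite_max_eq_one
    (σ.injective.ne (Fin.ne_of_val_ne (by omega : (p₀ : ℕ) ≠ p₁)))
    (σ.injective.ne (Fin.ne_of_val_ne (by omega : (p₀ : ℕ) ≠ p₂)))
    (σ.injective.ne (Fin.ne_of_val_ne (by omega : (p₁ : ℕ) ≠ p₂)))
  rw [sum_congr rfl below, sum_congr rfl above, dif_pos (by omega), dif_pos (by omega),
    dif_pos hj, peakIndicator_mul_eq_ite hj (a := p₀) (b := p₁) (c := p₂),
    peakIndicator_mul_eq_ite hj (a := p₁) (b := p₀) (c := p₂),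
    peakIndicator_mul_eq_ite hj (a := p₁) (b := p₂) (c := p₀), sum_const, sum_const,
    card_range, Nat.card_Ico, show n - (j + 3) = n - 3 - j by omega, nsmul_eq_mul, nsmul_eq_mul]
  · linear_combination one_max
  all_goals simp only [Fin.val_cycleRange, hp₀, hp₁, hp₂]; split_ifs <;> omega

end Peaks

section Weights

variable {n : ℕ}

theorem gpk_eq_sum_peakWeight_mul_peakIndicator (q : ℝ) (σ : Perm (Fin n)) :
    gpk n q σ = ∑ j ∈ range (n - 2), peakWeight n q j * peakIndicator n σ j := by
  simp only [peakIndicator, mul_ite, mul_one, mul_zero]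
  rw [sum_ite_mem, inter_eq_right.mpr peakSet_subset_range]
  rfl

theorem sum_peakWeight (hn : 3 ≤ n) (q : ℝ) : ∑ j ∈ range (n - 2), peakWeight n q j = 1 := by
  obtain ⟨m, rfl⟩ : ∃ m, n = m + 3 := ⟨n - 3, by omega⟩
  have := (add_pow q (1 - q) m).symm
  simp only [add_sub_cancel, one_pow] at this
  rw [← this]
  exact sum_congr rfl fun j _ => by simp only [peakWeight, add_tsub_cancel_right]; ring

theorem peakWeight_reflect {j : ℕ} (hj : j ≤ n - 3) (q : ℝ) :
    peakWeight n q (n - 3 - j) = peakWeight n (1 - q) j := by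
  simp only [peakWeight, Nat.choose_symm hj, Nat.sub_sub_self hj, sub_sub_cancel]
  ring

theorem peakWeight_succ (q : ℝ) (j : ℕ) :
    (1 - q) * (j + 1 : ℕ) * peakWeight n q (j + 1) = q * (n - 3 - j : ℕ) * peakWeight n q j := by
  unfold peakWeight
  rcases lt_or_ge j (n - 3) with h | h
  · have hc : ((n - 3).choose (j + 1) : ℝ) * (j + 1 : ℕ) = (n - 3).choose j * (n - 3 - j : ℕ) := by
      exact_mod_cast Nat.choose_succ_right_eq (n - 3) j
    rw [show n - 3 - j = n - 3 - (j + 1) + 1 by omega] at hc ⊢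
    linear_combination q ^ (j + 1) * (1 - q) ^ (n - 3 - (j + 1) + 1) * hc
  · simp [Nat.choose_eq_zero_of_lt (by omega : n - 3 < j + 1), Nat.sub_eq_zero_of_le h]

end Weights

section Step

variable {n : ℕ}

theorem mul_sum_gpk_mul_cycleRange (hn : 3 ≤ n) (q : ℝ) (σ : Perm (Fin n)) :
    q * ∑ i, gpk n q (σ * Fin.cycleRange i) = peakMoment n q σ + q := by
  have shift : ∑ j ∈ range (n - 2),
      q * ((n - 3 - j : ℕ) * peakWeight n q j * peakIndicator n σ (j + 1)) =
        (1 - q) * peakMoment n q σ := by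
    have key := sum_range_succ'
      (fun k => (1 - q) * (k * peakWeight n q k * peakIndicator n σ k)) (n - 2)
    rw [sum_range_succ, peakIndicator_of_le le_rfl] at key
    simp only [Nat.cast_zero, zero_mul, mul_zero, add_zero] at key
    rw [peakMoment, mul_sum, key]
    refine sum_congr rfl fun j _ => ?_
    linear_combination (-peakIndicator n σ (j + 1)) * peakWeight_succ (n := n) q j
  calc q * ∑ i, gpk n q (σ * Fin.cycleRange i)
      = q * ∑ j ∈ range (n - 2), peakWeight n q j * (j * peakIndicator n σ j +
          (n - 3 - j : ℕ) * peakIndicator n σ (j + 1) + 1) := by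
        simp_rw [gpk_eq_sum_peakWeight_mul_peakIndicator]
        rw [sum_comm]
        refine congrArg _ (sum_congr rfl fun j hj => ?_)
        rw [← mul_sum, sum_peakIndicator_mul_cycleRange σ (by rw [mem_range] at hj; omega)]
    _ = q * peakMoment n q σ + ∑ j ∈ range (n - 2),
          q * ((n - 3 - j : ℕ) * peakWeight n q j * peakIndicator n σ (j + 1)) +
          q * ∑ j ∈ range (n - 2), peakWeight n q j := by
        simp only [peakMoment, mul_sum, ← sum_add_distrib]
        exact sum_congr rfl fun j _ => by ring
    _ = peakMoment n q σ + q := by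
        rw [shift, sum_peakWeight hn]
        ring

theorem peakIndicator_mul_revPerm {σ : Perm (Fin n)} {j : ℕ} (hj : j + 2 < n) :
    peakIndicator n (σ * Fin.revPerm) j = peakIndicator n σ (n - 3 - j) := by
  simp only [peakIndicator, mem_peakSet_mul_revPerm_iff hj]

theorem gpk_mul_revPerm (q : ℝ) (σ : Perm (Fin n)) :
    gpk n q (σ * Fin.revPerm) = gpk n (1 - q) σ := by
  rw [gpk_eq_sum_peakWeight_mul_peakIndicator, gpk_eq_sum_peakWeight_mul_peakIndicator,
    ← sum_range_reflect]
  refine sum_congr rfl fun j hj => ?_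
  rw [mem_range] at hj
  rw [show n - 2 - 1 - j = n - 3 - j by omega, peakIndicator_mul_revPerm (by omega),
    Nat.sub_sub_self (by omega), peakWeight_reflect (by omega)]

theorem peakMoment_add_peakMoment_mul_revPerm (q : ℝ) (σ : Perm (Fin n)) :
    peakMoment n q σ + peakMoment n (1 - q) (σ * Fin.revPerm) = (n - 3) * gpk n q σ := by
  have reflected : peakMoment n (1 - q) (σ * Fin.revPerm) =
      ∑ j ∈ range (n - 2), (n - 3 - j : ℕ) * peakWeight n q j * peakIndicator n σ j := by
    rw [peakMoment, ← sum_range_reflect]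
    refine sum_congr rfl fun j hj => ?_
    rw [mem_range] at hj
    rw [show n - 2 - 1 - j = n - 3 - j by omega, peakIndicator_mul_revPerm (by omega),
      Nat.sub_sub_self (by omega), peakWeight_reflect (by omega), sub_sub_cancel]
  rw [reflected, peakMoment, ← sum_add_distrib, gpk_eq_sum_peakWeight_mul_peakIndicator, mul_sum]
  refine sum_congr rfl fun j hj => ?_
  rw [mem_range] at hj
  rw [Nat.cast_sub (by omega), Nat.cast_sub (by omega)]
  ring

theorem sum_gpk_mul_botCycle (q : ℝ) (σ : Perm (Fin n)) :
    ∑ i, gpk n q (σ * botCycle n i) = ∑ i, gpk n (1 - q) (σ * Fin.revPerm * Fin.cycleRange i) := by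
  simp only [botCycle, ← mul_assoc, gpk_mul_revPerm]
  exact Fintype.sum_equiv Fin.revPerm _ _ fun _ => rfl

theorem Pq_mulVec_gpk_apply (hn : 3 ≤ n) (q : ℝ) (σ : Perm (Fin n)) :
    (Pq n q *ᵥ gpk n q) σ = ((n - 3) * gpk n q σ + 1) / n := by
  have top := mul_sum_gpk_mul_cycleRange hn q σ
  have bottom := mul_sum_gpk_mul_cycleRange hn (1 - q) (σ * Fin.revPerm)
  rw [Pq_mulVec_apply, sum_gpk_mul_botCycle, ← peakMoment_add_peakMoment_mul_revPerm q σ]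
  linear_combination (top + bottom) / n

end Step

theorem gpk_one (n : ℕ) (q : ℝ) : gpk n q 1 = 0 := by
  rw [gpk, sum_eq_zero]
  intro j hj
  simp [peakSet] at hj

theorem stmt12_general (n : ℕ) (hn : 3 ≤ n) (q : ℝ) (t : ℕ) :
    ((Pq n q) ^ t).mulVec (gpk n q) 1 = (1 - (((n : ℝ) - 3) / n) ^ t) * (1 / 3) := by
  have hn₀ : (n : ℝ) ≠ 0 := Nat.cast_ne_zero.mpr (by omega)
  have step : Pq n q *ᵥ gpk n q =
      ((n - 3) / n : ℝ) • gpk n q + ((1 - (n - 3) / n) * (1 / 3) : ℝ) • 1 := by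
    ext σ
    rw [Pq_mulVec_gpk_apply hn]
    simp only [Pi.add_apply, Pi.smul_apply, smul_eq_mul, Pi.one_apply]
    field_simp
    ring
  rw [Matrix.pow_mulVec_eq_of_mulVec_eq_affine (Pq_mulVec_one (by omega) q) step]
  simp [gpk_one]

/-- Starting from the ascending deck, the expected value of the weighted peak
statistic after `t` top-or-bottom-to-random shuffles is `(1 - ((n-3)/n)^t)/3`. -/
theorem stmt12 (n : ℕ) (hn : 3 ≤ n) (q : ℝ) (hq : q ∈ Set.Icc (0 : ℝ) 1) (t : ℕ) :
    ((Pq n q) ^ t).mulVec (gpk n q) 1 = (1 - (((n : ℝ) - 3) / n) ^ t) * (1 / 3) :=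
  stmt12_general n hn q t
end
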